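/- Let f_1, …, f_K be matrix-valued signals in L²(a,b; ℂ^{N×N}) with Gram-Schmidt orthogonalization f̂_1 = f_1 and f̂_k = f_k − ∑_{l=1}^{k−1} μ_{l,k} f̂_l for k = 2, …, K, where μ_{l,k} = ⟨f_k, f̂_l⟩ ⟨f̂_l, f̂_l⟩^{-1} and each ⟨f̂_l, f̂_l⟩ is invertible. Then for each k = 1, …, K, ‖f_k‖_M ≥ ‖f̂_k‖_M, where ‖g‖_M := ‖⟨g,g⟩‖_F^{1/2}. -/

import Mathlib

open MeasureTheory Matrix
open scoped ComplexOrder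

noncomputable section

/-- The open interval `(a, b)` in `ℝ` with extended-real endpoints. -/
def ival (a b : EReal) : Set ℝ := {t : ℝ | a < (t : EReal) ∧ (t : EReal) < b}

/-- `f` is a matrix-valued signal in `L²(a,b; ℂ^{N×N})`: each of its `N²`
entry functions is in `L²(a,b)`. -/
def IsSignal {N : ℕ} (a b : EReal) (f : ℝ → Matrix (Fin N) (Fin N) ℂ) : Prop :=
  ∀ k l : Fin N, MemLp (fun t => f t k l) 2 (volume.restrict (ival a b))

/-- The matrix-valued inner product `⟨f,g⟩ = ∫ₐᵇ f(t) g(t)† dt`, defined entrywise. -/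
def mvInner {N : ℕ} (a b : EReal) (f g : ℝ → Matrix (Fin N) (Fin N) ℂ) :
    Matrix (Fin N) (Fin N) ℂ :=
  Matrix.of fun k l => ∫ t in ival a b, (f t * (g t)ᴴ) k l

/-- The Frobenius norm of an `N × N` complex matrix. -/
def frobNorm {N : ℕ} (A : Matrix (Fin N) (Fin N) ℂ) : ℝ :=
  Real.sqrt (∑ k, ∑ l, ‖A k l‖ ^ 2)

/-- Linear independence of matrix-valued signals: whenever `f := ∑ k, F k * f k`
is degenerate (i.e. `⟨f,f⟩` is not invertible), the null space of `(F k)ᴴ`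
contains the null space of `⟨f,f⟩`, for every `k`. -/
def LinIndep {N K : ℕ} (a b : EReal) (f : Fin K → ℝ → Matrix (Fin N) (Fin N) ℂ) : Prop :=
  ∀ F : Fin K → Matrix (Fin N) (Fin N) ℂ,
    ¬ IsUnit (mvInner a b (fun t => ∑ k, F k * f k t) (fun t => ∑ k, F k * f k t)) →
    ∀ (k : Fin K) (u : Fin N → ℂ),
      (mvInner a b (fun t => ∑ j, F j * f j t) (fun t => ∑ j, F j * f j t)).mulVec u = 0 →
      ((F k)ᴴ).mulVec u = 0

/-! Writing `g = ∑_{l<k} μ_{l,k} f̂_l`, the recursion reads `f_k = f̂_k + g`. By strong induction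
on `k`, `⟨f̂_k, f̂_l⟩ = 0` for `l < k`: expanding `f̂_k`, only the `l`-th term of the sum survives,
and it cancels `⟨f_k, f̂_l⟩` by the choice of `μ_{l,k}`. Hence `⟨f_k, f_k⟩ = ⟨f̂_k, f̂_k⟩ + ⟨g, g⟩`
with both summands positive semidefinite, and for positive semidefinite `A`, `C`
`‖A + C‖_F² = ‖A‖_F² + ‖C‖_F² + 2 Re tr(AC) ≥ ‖A‖_F²`, because `tr(AC) = 𝟙ᴴ (A ⊙ Cᵀ) 𝟙 ≥ 0`
by the Schur product theorem. -/

open Finset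

section Signals

variable {N : ℕ} {a b : EReal} {f f₁ f₂ g g₁ g₂ h : ℝ → Matrix (Fin N) (Fin N) ℂ}

lemma IsSignal.add (hf : IsSignal a b f) (hg : IsSignal a b g) :
    IsSignal a b (fun t => f t + g t) :=
  fun k l => (hf k l).add (hg k l)

lemma IsSignal.sub (hf : IsSignal a b f) (hg : IsSignal a b g) :
    IsSignal a b (fun t => f t - g t) :=
  fun k l => (hf k l).sub (hg k l)

lemma IsSignal.const_mul (A : Matrix (Fin N) (Fin N) ℂ) (hg : IsSignal a b g) :
    IsSignal a b (fun t => A * g t) := fun k l => by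
  simp only [mul_apply]
  exact memLp_finsetSum _ fun m _ => (hg m l).const_mul _

lemma isSignal_sum {ι : Type*} (s : Finset ι) {F : ι → ℝ → Matrix (Fin N) (Fin N) ℂ}
    (hF : ∀ i ∈ s, IsSignal a b (F i)) : IsSignal a b (fun t => ∑ i ∈ s, F i t) := fun k l => by
  simp only [Matrix.sum_apply]
  exact memLp_finsetSum _ fun i hi => hF i hi k l

lemma IsSignal.integrable_mul_conjTranspose_apply (hf : IsSignal a b f) (hg : IsSignal a b g)
    (k l : Fin N) : Integrable (fun t => (f t * (g t)ᴴ) k l) (volume.restrict (ival a b)) := by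
  simp only [mul_apply, conjTranspose_apply]
  exact integrable_finsetSum _ fun m _ => (hf k m).integrable_mul (hg l m).star

lemma conjTranspose_mvInner (f g : ℝ → Matrix (Fin N) (Fin N) ℂ) :
    (mvInner a b f g)ᴴ = mvInner a b g f := by
  ext k l
  simp only [conjTranspose_apply, mvInner, of_apply]
  refine (integral_conj (f := fun t => (f t * (g t)ᴴ) l k)).symm.trans ?_
  congr 1 with t
  rw [← Complex.star_def, ← conjTranspose_apply, conjTranspose_mul, conjTranspose_conjTranspose]

lemma mvInner_add_left (h₁ : IsSignal a b f₁) (h₂ : IsSignal a b f₂) (hg : IsSignal a b g) :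
    mvInner a b (fun t => f₁ t + f₂ t) g = mvInner a b f₁ g + mvInner a b f₂ g := by
  ext k l
  simp only [mvInner, of_apply, Matrix.add_apply, Matrix.add_mul]
  exact integral_add (h₁.integrable_mul_conjTranspose_apply hg k l)
    (h₂.integrable_mul_conjTranspose_apply hg k l)

lemma mvInner_sub_left (h₁ : IsSignal a b f₁) (h₂ : IsSignal a b f₂) (hg : IsSignal a b g) :
    mvInner a b (fun t => f₁ t - f₂ t) g = mvInner a b f₁ g - mvInner a b f₂ g := by
  ext k l
  simp only [mvInner, of_apply, Matrix.sub_apply, Matrix.sub_mul]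
  exact integral_sub (h₁.integrable_mul_conjTranspose_apply hg k l)
    (h₂.integrable_mul_conjTranspose_apply hg k l)

lemma mvInner_sum_left {ι : Type*} (s : Finset ι) {F : ι → ℝ → Matrix (Fin N) (Fin N) ℂ}
    (hF : ∀ i ∈ s, IsSignal a b (F i)) (hg : IsSignal a b g) :
    mvInner a b (fun t => ∑ i ∈ s, F i t) g = ∑ i ∈ s, mvInner a b (F i) g := by
  ext k l
  simp only [mvInner, of_apply, Matrix.sum_apply, Finset.sum_mul]
  exact integral_finsetSum s fun i hi => (hF i hi).integrable_mul_conjTranspose_apply hg k l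

lemma mvInner_const_mul_left (A : Matrix (Fin N) (Fin N) ℂ) (hh : IsSignal a b h)
    (hg : IsSignal a b g) : mvInner a b (fun t => A * h t) g = A * mvInner a b h g := by
  ext k l
  simp only [mvInner, of_apply, Matrix.mul_assoc, mul_apply (M := A)]
  rw [integral_finsetSum _ fun m _ => (hh.integrable_mul_conjTranspose_apply hg m l).const_mul _]
  simp only [integral_const_mul]

lemma mvInner_add_right (hf : IsSignal a b f) (h₁ : IsSignal a b g₁) (h₂ : IsSignal a b g₂) :
    mvInner a b f (fun t => g₁ t + g₂ t) = mvInner a b f g₁ + mvInner a b f g₂ := by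
  rw [← conjTranspose_mvInner, mvInner_add_left h₁ h₂ hf, conjTranspose_add,
    conjTranspose_mvInner, conjTranspose_mvInner]

lemma mvInner_add_self_of_mvInner_eq_zero (hf : IsSignal a b f) (hg : IsSignal a b g)
    (hgf : mvInner a b g f = 0) :
    mvInner a b (fun t => f t + g t) (fun t => f t + g t) = mvInner a b f f + mvInner a b g g := by
  have hfg : mvInner a b f g = 0 := by rw [← conjTranspose_mvInner, hgf, conjTranspose_zero]
  rw [mvInner_add_left hf hg (hf.add hg), mvInner_add_right hf hf hg, mvInner_add_right hg hf hg,
    hfg, hgf, add_zero, zero_add]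

lemma dotProduct_mvInner_mulVec (hf : IsSignal a b f) (hg : IsSignal a b g) (u v : Fin N → ℂ) :
    star u ⬝ᵥ (mvInner a b f g *ᵥ v) = ∫ t in ival a b, star u ⬝ᵥ ((f t * (g t)ᴴ) *ᵥ v) := by
  simp only [dotProduct, mulVec, mvInner, of_apply, Finset.mul_sum]
  have hint (k l : Fin N) :=
    ((hf.integrable_mul_conjTranspose_apply hg k l).mul_const (v l)).const_mul (star u k)
  rw [integral_finsetSum _ fun k _ => integrable_finsetSum _ fun l _ => hint k l]
  congr 1 with k
  rw [integral_finsetSum _ fun l _ => hint k l]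
  simp only [integral_const_mul, integral_mul_const]

lemma posSemidef_mvInner_self (hf : IsSignal a b f) : (mvInner a b f f).PosSemidef := by
  refine posSemidef_iff_dotProduct_mulVec.mpr ⟨conjTranspose_mvInner f f, fun u => ?_⟩
  rw [dotProduct_mvInner_mulVec hf hf]
  exact integral_nonneg fun t =>
    (posSemidef_self_mul_conjTranspose (f t)).dotProduct_mulVec_nonneg u

end Signals

lemma Matrix.PosSemidef.trace_mul_nonneg {𝕜 n : Type*} [RCLike 𝕜] [Fintype n]
    {A B : Matrix n n 𝕜} (hA : A.PosSemidef) (hB : B.PosSemidef) : 0 ≤ (A * B).trace := by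
  have hAB : (A * B).trace = star (fun _ => 1 : n → 𝕜) ⬝ᵥ ((A ⊙ Bᵀ) *ᵥ fun _ => 1) := by
    simp [trace, mul_apply, dotProduct, mulVec, hadamard_apply]
  rw [hAB]
  exact (hA.hadamard hB.transpose).dotProduct_mulVec_nonneg _

lemma frobNorm_le_frobNorm_add {N : ℕ} {A C : Matrix (Fin N) (Fin N) ℂ}
    (hA : A.PosSemidef) (hC : C.PosSemidef) : frobNorm A ≤ frobNorm (A + C) := by
  have hcross : ∑ k, ∑ l, A k l * star (C k l) = (A * C).trace := by
    conv_rhs => rw [← hC.isHermitian.eq]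
    simp [trace, mul_apply, conjTranspose_apply]
  have hexpand : ∑ k, ∑ l, ‖(A + C) k l‖ ^ 2
      = ∑ k, ∑ l, ‖A k l‖ ^ 2 + ∑ k, ∑ l, ‖C k l‖ ^ 2 + 2 * ((A * C).trace).re := by
    simp only [← hcross, Complex.re_sum, Finset.mul_sum, ← Finset.sum_add_distrib,
      Matrix.add_apply, Complex.sq_norm, Complex.normSq_add, Complex.star_def]
  have htrace : 0 ≤ ((A * C).trace).re := (Complex.nonneg_iff.mp (hA.trace_mul_nonneg hC)).1
  refine Real.sqrt_le_sqrt ?_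
  rw [hexpand]
  have : 0 ≤ ∑ k, ∑ l, ‖C k l‖ ^ 2 := by positivity
  linarith

section GramSchmidt

variable {N K : ℕ} {a b : EReal} {f fhat : Fin K → ℝ → Matrix (Fin N) (Fin N) ℂ}
  {μ : Fin K → Fin K → Matrix (Fin N) (Fin N) ℂ}

lemma isSignal_of_gramSchmidt (hf : ∀ k, IsSignal a b (f k))
    (hrec : ∀ k, fhat k = fun t => f k t - ∑ l ∈ Iio k, μ l k * fhat l t) (k : Fin K) :
    IsSignal a b (fhat k) := by
  induction k using WellFoundedLT.induction with
  | _ k ih =>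
    rw [hrec k]
    exact (hf k).sub (isSignal_sum _ fun l hl => (ih l (mem_Iio.mp hl)).const_mul _)

lemma mvInner_eq_zero_of_gramSchmidt (hf : ∀ k, IsSignal a b (f k))
    (hμ : ∀ l k, μ l k = mvInner a b (f k) (fhat l) * (mvInner a b (fhat l) (fhat l))⁻¹)
    (hinv : ∀ l, IsUnit (mvInner a b (fhat l) (fhat l)))
    (hrec : ∀ k, fhat k = fun t => f k t - ∑ l ∈ Iio k, μ l k * fhat l t)
    {k l : Fin K} (hlk : l < k) : mvInner a b (fhat k) (fhat l) = 0 := by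
  have hsig := isSignal_of_gramSchmidt hf hrec
  induction k using WellFoundedLT.induction generalizing l with
  | _ k ih =>
    have hterms : ∀ j ∈ Iio k, IsSignal a b (fun t => μ j k * fhat j t) :=
      fun j _ => (hsig j).const_mul _
    have hsum : ∑ j ∈ Iio k, μ j k * mvInner a b (fhat j) (fhat l)
        = μ l k * mvInner a b (fhat l) (fhat l) := by
      refine sum_eq_single_of_mem l (mem_Iio.mpr hlk) fun j hjk hjl => ?_
      rcases hjl.lt_or_gt with hjl | hlj
      · rw [← conjTranspose_mvInner, ih l hlk hjl, conjTranspose_zero, mul_zero]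
      · rw [ih j (mem_Iio.mp hjk) hlj, mul_zero]
    rw [hrec k, mvInner_sub_left (hf k) (isSignal_sum _ hterms) (hsig l),
      mvInner_sum_left _ hterms (hsig l)]
    simp_rw [mvInner_const_mul_left _ (hsig _) (hsig l)]
    rw [hsum, hμ, Matrix.mul_assoc, nonsing_inv_mul _ ((isUnit_iff_isUnit_det _).mp (hinv l)),
      Matrix.mul_one, sub_self]

end GramSchmidt

theorem stmt_16_general {N K : ℕ} (a b : EReal)
    (f fhat : Fin K → ℝ → Matrix (Fin N) (Fin N) ℂ) (hf : ∀ k, IsSignal a b (f k))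
    (μ : Fin K → Fin K → Matrix (Fin N) (Fin N) ℂ)
    (hμ : ∀ l k, μ l k = mvInner a b (f k) (fhat l) * (mvInner a b (fhat l) (fhat l))⁻¹)
    (hinv : ∀ l, IsUnit (mvInner a b (fhat l) (fhat l)))
    (hrec : ∀ k, fhat k = fun t => f k t - ∑ l ∈ Finset.Iio k, μ l k * fhat l t) :
    ∀ k : Fin K,
      Real.sqrt (frobNorm (mvInner a b (fhat k) (fhat k))) ≤
        Real.sqrt (frobNorm (mvInner a b (f k) (f k))) := by
  intro k
  have hsig := isSignal_of_gramSchmidt hf hrec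
  set g := fun t => ∑ l ∈ Iio k, μ l k * fhat l t
  have hterms : ∀ l ∈ Iio k, IsSignal a b (fun t => μ l k * fhat l t) :=
    fun l _ => (hsig l).const_mul _
  have hg : IsSignal a b g := isSignal_sum _ hterms
  have hfk : f k = fun t => fhat k t + g t := by
    ext1 t
    rw [hrec k, sub_add_cancel]
  have horth : mvInner a b g (fhat k) = 0 := by
    rw [mvInner_sum_left _ hterms (hsig k)]
    refine sum_eq_zero fun l hl => ?_
    rw [mvInner_const_mul_left _ (hsig l) (hsig k), ← conjTranspose_mvInner,
      mvInner_eq_zero_of_gramSchmidt hf hμ hinv hrec (mem_Iio.mp hl), conjTranspose_zero, mul_zero]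
  rw [hfk, mvInner_add_self_of_mvInner_eq_zero (hsig k) hg horth]
  exact Real.sqrt_le_sqrt (frobNorm_le_frobNorm_add (posSemidef_mvInner_self (hsig k))
    (posSemidef_mvInner_self hg))

/-- with the Gram-Schmidt orthogonalization of statement 14,
`‖f_k‖_M ≥ ‖f̂_k‖_M`, where `‖g‖_M = ‖⟨g,g⟩‖_F^{1/2}`. -/
theorem stmt_16 {N K : ℕ} (a b : EReal) (hab : a < b)
    (f fhat : Fin K → ℝ → Matrix (Fin N) (Fin N) ℂ) (hf : ∀ k, IsSignal a b (f k))
    (μ : Fin K → Fin K → Matrix (Fin N) (Fin N) ℂ)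
    (hμ : ∀ l k, μ l k = mvInner a b (f k) (fhat l) * (mvInner a b (fhat l) (fhat l))⁻¹)
    (hinv : ∀ l, IsUnit (mvInner a b (fhat l) (fhat l)))
    (hrec : ∀ k, fhat k = fun t => f k t - ∑ l ∈ Finset.Iio k, μ l k * fhat l t) :
    ∀ k : Fin K,
      Real.sqrt (frobNorm (mvInner a b (fhat k) (fhat k))) ≤
        Real.sqrt (frobNorm (mvInner a b (f k) (f k))) :=
  stmt_16_general a b f fhat hf μ hμ hinv hrec
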